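/- arXiv:1809.08408 — 4 statements merged into one kernel-verified Lean document; each statement's English description precedes it below -/
import Mathlib

section
/- Let G be a finite simple graph with n ≥ 1 vertices and let c(G) := (-1)^n · Σ_{k=1}^{n} (-1)^k c_k(G)/k, where c_k(G) is the number of ordered partitions of the vertex set into k nonempty independent subsets. Then c(G) > 0 if and only if G is connected. -/
/-!
Fix a vertex `v`. By symmetry of the blocks, `c_k(G)/k` counts ordered `k`-partitions whose last
block contains `v`, and deleting the last block expresses these through ordered partitions of
smaller vertex sets. Acyclic orientations obey the matching recursion: every acyclic orientation of
`G[W]` has a nonempty independent set of sources, and inclusion–exclusion over the nonempty subsets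
of that set gives `a(W) = ∑_{I} (-1)^{|I|+1} a(W \ I)` over nonempty independent `I ⊆ W`. Hence
`∑_k (-1)^{|W|+k} c_k(G[W]) = a(W)` (Stanley), and `c(G)` is the number of acyclic orientations of
`G` whose only source is `v`. Every acyclic orientation has a source in each connected component,
so such orientations exist only when `G` is connected; conversely, orienting each edge away from
`v` in breadth-first order produces one.
-/

open Finset

/-- A finset of vertices is independent: no two of its elements are adjacent. -/
def IndepSet {V : Type*} (G : SimpleGraph V) (S : Finset V) : Prop :=
  ∀ v ∈ S, ∀ w ∈ S, ¬ G.Adj v w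

/-- The number of ordered `k`-partitions of the vertex set of `G` into nonempty
pairwise disjoint independent subsets. -/
noncomputable def orderedPartCount {V : Type*} [Fintype V] (G : SimpleGraph V) (k : ℕ) : ℕ :=
  Nat.card {J : Fin k → Finset V //
    (∀ i, (J i).Nonempty) ∧ (∀ i, IndepSet G (J i)) ∧
    (∀ i j, i ≠ j → Disjoint (J i) (J j)) ∧ (∀ v : V, ∃ i, v ∈ J i)}

/-- The quantity `c(G) = (-1)^n ∑_{k=1}^n (-1)^k c_k(G)/k`. -/
noncomputable def cNum {V : Type*} [Fintype V] (G : SimpleGraph V) : ℚ :=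
  (-1 : ℚ) ^ (Fintype.card V) *
    ∑ k ∈ Finset.Icc 1 (Fintype.card V), (-1 : ℚ) ^ k * (orderedPartCount G k : ℚ) / k

lemma IndepSet.mono {V : Type*} {G : SimpleGraph V} {S T : Finset V} (hT : IndepSet G T)
    (hST : S ⊆ T) : IndepSet G S :=
  fun v hv w hw => hT v (hST hv) w (hST hw)

lemma Finset.sum_powerset_filter_nonempty_neg_one_pow {α : Type*} {T : Finset α}
    (hT : T.Nonempty) : ∑ I ∈ T.powerset with I.Nonempty, -(-1 : ℤ) ^ #I = 1 := by
  classical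
  have hsplit := sum_filter_add_sum_filter_not T.powerset (·.Nonempty) fun I => (-1 : ℤ) ^ #I
  have hempty : {I ∈ T.powerset | ¬ I.Nonempty} = {∅} := by
    ext I; simp +contextual [not_nonempty_iff_eq_empty]
  rw [sum_powerset_neg_one_pow_card_of_nonempty hT, hempty, sum_singleton] at hsplit
  rw [sum_neg_distrib]
  simpa [neg_eq_iff_add_eq_zero] using hsplit

lemma Finset.sum_powerset_filter_mem_neg_one_pow {α : Type*} [DecidableEq α] (T : Finset α)
    (a : α) : ∑ I ∈ T.powerset with a ∈ I, -(-1 : ℤ) ^ #I = if T = {a} then 1 else 0 := by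
  by_cases ha : a ∈ T
  · rw [← insert_erase ha, sum_filter, sum_powerset_insert (notMem_erase a T)]
    have hfst : ∀ I ∈ (T.erase a).powerset, a ∉ I := fun I hI haI =>
      notMem_erase a T (mem_powerset.mp hI haI)
    have hsnd : ∀ I ∈ (T.erase a).powerset, #(insert a I) = #I + 1 := fun I hI =>
      card_insert_of_notMem (hfst I hI)
    rw [sum_congr rfl fun I hI => if_neg (hfst I hI), sum_const_zero, zero_add,
      sum_congr rfl fun I hI => by rw [if_pos (mem_insert_self a I), hsnd I hI],
      sum_congr rfl fun I _ => by rw [pow_succ, mul_neg_one, neg_neg],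
      sum_powerset_neg_one_pow_card, insert_erase ha]
    simp [erase_eq_empty_iff, ne_empty_of_mem ha]
  · rw [filter_false_of_mem fun I hI haI => ha (mem_powerset.mp hI haI), sum_empty,
      if_neg (by rintro rfl; exact ha (mem_singleton_self a))]

lemma Finset.neg_one_pow_card_sdiff {α : Type*} [DecidableEq α] {I W : Finset α} (h : I ⊆ W) :
    (-1 : ℤ) ^ #(W \ I) = (-1) ^ #W * (-1) ^ #I := by
  rw [← card_sdiff_add_card_eq_card h, pow_add, mul_assoc, ← pow_add, Even.neg_one_pow ⟨_, rfl⟩,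
    mul_one]

lemma SimpleGraph.Reachable.exists_adj_dist_lt {V : Type*} {G : SimpleGraph V} {x v : V}
    (h : G.Reachable x v) (hne : x ≠ v) :
    ∃ y, G.Adj x y ∧ G.dist y v < G.dist x v := by
  obtain ⟨p, hp⟩ := h.exists_walk_length_eq_dist
  cases p with
  | nil => exact absurd rfl hne
  | cons hadj q =>
    rw [SimpleGraph.Walk.length_cons] at hp
    exact ⟨_, hadj, (SimpleGraph.dist_le q).trans_lt (by omega)⟩

namespace SimpleGraph

open scoped Classical

variable {V : Type*} {G : SimpleGraph V}

variable (G) in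
structure IsOrderedPartition (W : Finset V) {k : ℕ} (J : Fin k → Finset V) : Prop where
  nonempty : ∀ i, (J i).Nonempty
  indep : ∀ i, IndepSet G (J i)
  disjoint : ∀ i j, i ≠ j → Disjoint (J i) (J j)
  subset : ∀ i, J i ⊆ W
  cover : ∀ v ∈ W, ∃ i, v ∈ J i

variable (G) in
noncomputable def indepBlocks (W : Finset V) : Finset (Finset V) :=
  {I ∈ W.powerset | I.Nonempty ∧ IndepSet G I}

lemma mem_indepBlocks {W I : Finset V} :
    I ∈ G.indepBlocks W ↔ I ⊆ W ∧ I.Nonempty ∧ IndepSet G I := by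
  simp [indepBlocks]

namespace IsOrderedPartition

variable {W : Finset V} {k : ℕ}

lemma card_le {J : Fin k → Finset V} (hJ : G.IsOrderedPartition W J) : k ≤ #W := by
  choose f hf using hJ.nonempty
  simpa using card_le_card_of_injOn (s := univ) f (fun i _ => hJ.subset i (hf i)) fun i _ j _ hij =>
    by_contra fun hne => Finset.disjoint_left.mp (hJ.disjoint i j hne) (hf i) (hij ▸ hf j)

lemma comp_perm {J : Fin k → Finset V} (hJ : G.IsOrderedPartition W J) (σ : Equiv.Perm (Fin k)) :
    G.IsOrderedPartition W (J ∘ σ) where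
  nonempty i := hJ.nonempty (σ i)
  indep i := hJ.indep (σ i)
  disjoint i j hij := hJ.disjoint _ _ (σ.injective.ne hij)
  subset i := hJ.subset (σ i)
  cover v hv := by
    obtain ⟨i, hi⟩ := hJ.cover v hv
    exact ⟨σ.symm i, by simpa using hi⟩

lemma init {J : Fin (k + 1) → Finset V} (hJ : G.IsOrderedPartition W J) :
    G.IsOrderedPartition (W \ J (Fin.last k)) (Fin.init J) where
  nonempty i := hJ.nonempty _
  indep i := hJ.indep _
  disjoint i j hij := hJ.disjoint _ _ (Fin.castSucc_injective _ |>.ne hij)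
  subset i := subset_sdiff.mpr ⟨hJ.subset _, hJ.disjoint _ _ (Fin.castSucc_lt_last i).ne⟩
  cover v hv := by
    obtain ⟨hvW, hvI⟩ := mem_sdiff.mp hv
    obtain ⟨i, hi⟩ := hJ.cover v hvW
    induction i using Fin.lastCases with
    | last => exact absurd hi hvI
    | cast i => exact ⟨i, hi⟩

lemma snoc {J : Fin k → Finset V} {I : Finset V} (hJ : G.IsOrderedPartition (W \ I) J)
    (hI : I ∈ G.indepBlocks W) :
    G.IsOrderedPartition W (Fin.snoc J I : Fin (k + 1) → Finset V) := by
  obtain ⟨hIW, hIne, hIind⟩ := mem_indepBlocks.mp hI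
  have hdisj : ∀ i, Disjoint (J i) I := fun i => (subset_sdiff.mp (hJ.subset i)).2
  refine ⟨?_, ?_, ?_, ?_, ?_⟩
  · simpa [Fin.forall_fin_succ'] using ⟨hJ.nonempty, hIne⟩
  · simpa [Fin.forall_fin_succ'] using ⟨hJ.indep, hIind⟩
  · simp only [Fin.forall_fin_succ', Fin.snoc_castSucc, Fin.snoc_last, ne_eq,
      Fin.castSucc_inj, Fin.castSucc_ne_last, (Fin.castSucc_ne_last _).symm]
    exact ⟨fun i => ⟨fun j => hJ.disjoint i j, fun _ => hdisj i⟩,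
      fun j _ => (hdisj j).symm, (absurd trivial ·)⟩
  · simpa [Fin.forall_fin_succ'] using ⟨fun i => (hJ.subset i).trans sdiff_subset, hIW⟩
  · intro v hv
    by_cases hvI : v ∈ I
    · exact ⟨Fin.last k, by simpa using hvI⟩
    · obtain ⟨i, hi⟩ := hJ.cover v (mem_sdiff.mpr ⟨hv, hvI⟩)
      exact ⟨i.castSucc, by simpa using hi⟩

lemma card_filter_mem {J : Fin k → Finset V} (hJ : G.IsOrderedPartition W J) {v : V}
    (hv : v ∈ W) : #{i | v ∈ J i} = 1 := by
  obtain ⟨i, hi⟩ := hJ.cover v hv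
  refine card_eq_one.mpr ⟨i, eq_singleton_iff_unique_mem.mpr ⟨by simpa using hi, fun j hj => ?_⟩⟩
  by_contra hji
  exact Finset.disjoint_left.mp (hJ.disjoint j i hji) (mem_filter.mp hj).2 hi

end IsOrderedPartition

section

variable [Fintype V]

variable (G) in
noncomputable def orderedPartitions (W : Finset V) (k : ℕ) : Finset (Fin k → Finset V) :=
  {J | G.IsOrderedPartition W J}

lemma mem_orderedPartitions {W : Finset V} {k : ℕ} {J : Fin k → Finset V} :
    J ∈ G.orderedPartitions W k ↔ G.IsOrderedPartition W J := by
  simp [orderedPartitions]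

lemma card_orderedPartitions_of_card_lt {W : Finset V} {k : ℕ} (h : #W < k) :
    #(G.orderedPartitions W k) = 0 := by
  simpa [card_eq_zero, eq_empty_iff_forall_notMem, mem_orderedPartitions] using
    fun J hJ => (h.trans_le (IsOrderedPartition.card_le hJ)).false

lemma card_orderedPartitions_zero (W : Finset V) :
    #(G.orderedPartitions W 0) = if W = ∅ then 1 else 0 := by
  have hJ : ∀ J : Fin 0 → Finset V, G.IsOrderedPartition W J ↔ W = ∅ := fun J =>
    ⟨fun hJ => eq_empty_of_forall_notMem fun v hv => (hJ.cover v hv).elim fun i _ => i.elim0,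
      fun hW => ⟨(·.elim0), (·.elim0), fun i => i.elim0, (·.elim0), by simp [hW]⟩⟩
  rw [orderedPartitions, filter_congr fun J _ => hJ J]
  split_ifs with hW <;> simp [hW]

lemma card_orderedPartitions_filter_last_eq {W I : Finset V} (hI : I ∈ G.indepBlocks W) (k : ℕ) :
    #{J ∈ G.orderedPartitions W (k + 1) | J (Fin.last k) = I} =
      #(G.orderedPartitions (W \ I) k) := by
  refine card_nbij' Fin.init (Fin.snoc · I) ?_ ?_ ?_ ?_
  · intro J hJ
    obtain ⟨hJ, hJI⟩ := mem_filter.mp hJ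
    exact mem_orderedPartitions.mpr (hJI ▸ (mem_orderedPartitions.mp hJ).init)
  · intro J hJ
    exact mem_filter.mpr ⟨mem_orderedPartitions.mpr ((mem_orderedPartitions.mp hJ).snoc hI),
      Fin.snoc_last _ _⟩
  · intro J hJ
    obtain ⟨-, hJI⟩ := mem_filter.mp hJ
    exact hJI ▸ Fin.snoc_init_self J
  · intro J _
    exact Fin.init_snoc _ _

lemma card_orderedPartitions_succ_filter (W : Finset V) (k : ℕ) (Q : Finset V → Prop)
    [DecidablePred Q] :
    #{J ∈ G.orderedPartitions W (k + 1) | Q (J (Fin.last k))} =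
      ∑ I ∈ G.indepBlocks W with Q I, #(G.orderedPartitions (W \ I) k) := by
  rw [card_eq_sum_card_fiberwise (f := (· (Fin.last k))) (t := {I ∈ G.indepBlocks W | Q I})]
  · refine sum_congr rfl fun I hI => ?_
    obtain ⟨hI, hQ⟩ := mem_filter.mp hI
    rw [← card_orderedPartitions_filter_last_eq hI, filter_filter]
    exact congrArg card (filter_congr fun J _ => and_iff_right_of_imp (· ▸ hQ))
  · intro J hJ
    obtain ⟨hJ, hQ⟩ := mem_filter.mp hJ
    have hJ := mem_orderedPartitions.mp hJ
    exact mem_filter.mpr ⟨mem_indepBlocks.mpr ⟨hJ.subset _, hJ.nonempty _, hJ.indep _⟩, hQ⟩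

lemma card_orderedPartitions_filter_mem_eq (W : Finset V) {k : ℕ} (v : V) (i j : Fin k) :
    #{J ∈ G.orderedPartitions W k | v ∈ J i} = #{J ∈ G.orderedPartitions W k | v ∈ J j} := by
  have hswap : ∀ J : Fin k → Finset V, J ∘ Equiv.swap i j ∘ Equiv.swap i j = J := fun J => by
    ext1 l; simp [Equiv.swap_apply_self]
  refine card_nbij' (· ∘ Equiv.swap i j) (· ∘ Equiv.swap i j) ?_ ?_
    (fun J _ => hswap J) (fun J _ => hswap J)
  all_goals
    intro J hJ
    obtain ⟨hJ, hv⟩ := mem_filter.mp hJ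
    exact mem_filter.mpr ⟨mem_orderedPartitions.mpr ((mem_orderedPartitions.mp hJ).comp_perm _),
      by simpa using hv⟩

lemma card_orderedPartitions_eq_mul {W : Finset V} {k : ℕ} {v : V} (hv : v ∈ W) (i : Fin k) :
    #(G.orderedPartitions W k) = k * #{J ∈ G.orderedPartitions W k | v ∈ J i} := by
  calc #(G.orderedPartitions W k)
      = ∑ J ∈ G.orderedPartitions W k, #{j | v ∈ J j} := by
        rw [card_eq_sum_ones]
        exact sum_congr rfl fun J hJ => ((mem_orderedPartitions.mp hJ).card_filter_mem hv).symm
    _ = ∑ j, #{J ∈ G.orderedPartitions W k | v ∈ J j} := by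
        simp_rw [card_filter]; exact sum_comm
    _ = k * #{J ∈ G.orderedPartitions W k | v ∈ J i} := by
        simp [card_orderedPartitions_filter_mem_eq W v _ i]

end

variable (G) in
/-- Orientations are sets of arcs; acyclicity is encoded as: every nonempty vertex set contains a
vertex that no arc from inside the set enters. -/
structure IsAcyclicOrientation (W : Finset V) (D : Finset (V × V)) : Prop where
  arc_of_mem : ∀ p ∈ D, p.1 ∈ W ∧ p.2 ∈ W ∧ G.Adj p.1 p.2
  orient : ∀ u ∈ W, ∀ v ∈ W, G.Adj u v → ((u, v) ∈ D ↔ (v, u) ∉ D)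
  exists_source : ∀ S ⊆ W, S.Nonempty → ∃ v ∈ S, ∀ u ∈ S, (u, v) ∉ D

noncomputable def sources (W : Finset V) (D : Finset (V × V)) : Finset V :=
  {v ∈ W | ∀ u, (u, v) ∉ D}

lemma mem_sources {W : Finset V} {D : Finset (V × V)} {v : V} :
    v ∈ sources W D ↔ v ∈ W ∧ ∀ u, (u, v) ∉ D :=
  mem_filter

lemma sources_subset {W : Finset V} {D : Finset (V × V)} : sources W D ⊆ W :=
  fun _ hv => (mem_sources.mp hv).1

namespace IsAcyclicOrientation

variable {W : Finset V} {D : Finset (V × V)}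

lemma indepSet_sources (hD : G.IsAcyclicOrientation W D) : IndepSet G (sources W D) := by
  intro u hu v hv huv
  rw [mem_sources] at hu hv
  exact hv.2 u ((hD.orient u hu.1 v hv.1 huv).mpr (hu.2 v))

lemma sources_nonempty (hD : G.IsAcyclicOrientation W D) (hW : W.Nonempty) :
    (sources W D).Nonempty := by
  obtain ⟨v, hv, hsrc⟩ := hD.exists_source W subset_rfl hW
  exact ⟨v, mem_sources.mpr ⟨hv, fun u hu => hsrc u (hD.arc_of_mem _ hu).1 hu⟩⟩

lemma restrict (hD : G.IsAcyclicOrientation W D) {S : Finset V} (hS : S ⊆ W) :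
    G.IsAcyclicOrientation S {p ∈ D | p.1 ∈ S ∧ p.2 ∈ S} where
  arc_of_mem p hp := by
    obtain ⟨hp, h1, h2⟩ := mem_filter.mp hp
    exact ⟨h1, h2, (hD.arc_of_mem p hp).2.2⟩
  orient u hu v hv huv := by
    simpa [hu, hv] using hD.orient u (hS hu) v (hS hv) huv
  exists_source T hT hTne := by
    obtain ⟨v, hv, hsrc⟩ := hD.exists_source T (hT.trans hS) hTne
    exact ⟨v, hv, fun u hu hmem => hsrc u hu (mem_filter.mp hmem).1⟩

lemma endpoints_notMem {I : Finset V} (hD : G.IsAcyclicOrientation (W \ I) D) {p : V × V}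
    (hp : p ∈ D) : p.1 ∉ I ∧ p.2 ∉ I :=
  ⟨(mem_sdiff.mp (hD.arc_of_mem p hp).1).2, (mem_sdiff.mp (hD.arc_of_mem p hp).2.1).2⟩

end IsAcyclicOrientation

variable [Fintype V]

variable (G) in
noncomputable def arcsFrom (I W : Finset V) : Finset (V × V) :=
  {p | p.1 ∈ I ∧ p.2 ∈ W ∧ G.Adj p.1 p.2}

lemma mem_arcsFrom {I W : Finset V} {p : V × V} :
    p ∈ G.arcsFrom I W ↔ p.1 ∈ I ∧ p.2 ∈ W ∧ G.Adj p.1 p.2 := by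
  simp [arcsFrom]

namespace IsAcyclicOrientation

variable {W I : Finset V} {D : Finset (V × V)}

lemma union_arcsFrom (hD : G.IsAcyclicOrientation (W \ I) D) (hIW : I ⊆ W)
    (hI : IndepSet G I) : G.IsAcyclicOrientation W (D ∪ G.arcsFrom I (W \ I)) where
  arc_of_mem p hp := by
    rcases mem_union.mp hp with hp | hp
    · obtain ⟨h1, h2, hadj⟩ := hD.arc_of_mem p hp
      exact ⟨sdiff_subset h1, sdiff_subset h2, hadj⟩
    · obtain ⟨h1, h2, hadj⟩ := mem_arcsFrom.mp hp
      exact ⟨hIW h1, sdiff_subset h2, hadj⟩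
  orient u hu v hv huv := by
    have hDuv := hD.endpoints_notMem (p := (u, v))
    have hDvu := hD.endpoints_notMem (p := (v, u))
    by_cases huI : u ∈ I <;> by_cases hvI : v ∈ I
    · exact absurd huv (hI u huI v hvI)
    all_goals
      simp only [mem_union, mem_arcsFrom, mem_sdiff, huI, hvI, hu, hv, huv, huv.symm]
    · simp_all
    · simp_all
    · simpa using hD.orient u (mem_sdiff.mpr ⟨hu, huI⟩) v (mem_sdiff.mpr ⟨hv, hvI⟩) huv
  exists_source S hS hSne := by
    by_cases hSI : ∃ v ∈ S, v ∈ I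
    · obtain ⟨v, hvS, hvI⟩ := hSI
      refine ⟨v, hvS, fun u _ hmem => ?_⟩
      rcases mem_union.mp hmem with h | h
      · exact (hD.endpoints_notMem h).2 hvI
      · exact (mem_sdiff.mp (mem_arcsFrom.mp h).2.1).2 hvI
    · push Not at hSI
      obtain ⟨v, hvS, hsrc⟩ :=
        hD.exists_source S (fun x hx => mem_sdiff.mpr ⟨hS hx, hSI x hx⟩) hSne
      refine ⟨v, hvS, fun u hu hmem => ?_⟩
      rcases mem_union.mp hmem with h | h
      · exact hsrc u hu h
      · exact hSI u hu (mem_arcsFrom.mp h).1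

lemma subset_sources_union_arcsFrom (hD : G.IsAcyclicOrientation (W \ I) D) (hIW : I ⊆ W) :
    I ⊆ sources W (D ∪ G.arcsFrom I (W \ I)) := fun _ hv =>
  mem_sources.mpr ⟨hIW hv, fun _ hmem => (mem_union.mp hmem).elim
    (fun h => (hD.endpoints_notMem h).2 hv)
    (fun h => (mem_sdiff.mp (mem_arcsFrom.mp h).2.1).2 hv)⟩

end IsAcyclicOrientation

variable (G) in
noncomputable def acyclicOrientations (W : Finset V) : Finset (Finset (V × V)) :=
  {D | G.IsAcyclicOrientation W D}

lemma mem_acyclicOrientations {W : Finset V} {D : Finset (V × V)} :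
    D ∈ G.acyclicOrientations W ↔ G.IsAcyclicOrientation W D := by
  simp [acyclicOrientations]

lemma card_acyclicOrientations_sdiff {W I : Finset V} (hIW : I ⊆ W) (hI : IndepSet G I) :
    #(G.acyclicOrientations (W \ I)) = #{D ∈ G.acyclicOrientations W | I ⊆ sources W D} := by
  refine card_nbij' (· ∪ G.arcsFrom I (W \ I)) ({p ∈ · | p.1 ∈ W \ I ∧ p.2 ∈ W \ I})
    ?_ ?_ ?_ ?_
  · intro D hD
    have hD := mem_acyclicOrientations.mp hD
    exact mem_filter.mpr ⟨mem_acyclicOrientations.mpr (hD.union_arcsFrom hIW hI),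
      hD.subset_sources_union_arcsFrom hIW⟩
  · intro D hD
    exact mem_acyclicOrientations.mpr
      ((mem_acyclicOrientations.mp (mem_filter.mp hD).1).restrict sdiff_subset)
  · intro D hD
    ext p
    have hD := (mem_acyclicOrientations.mp hD).arc_of_mem p
    simp only [mem_union, mem_filter, mem_sdiff, mem_arcsFrom] at hD ⊢
    tauto
  · intro D hD
    obtain ⟨hD, hsrc⟩ := mem_filter.mp hD
    have hD := mem_acyclicOrientations.mp hD
    ext ⟨u, v⟩
    have hsrc_u : u ∈ I → (v, u) ∉ D := fun hu => (mem_sources.mp (hsrc hu)).2 v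
    have hsrc_v : v ∈ I → (u, v) ∉ D := fun hv => (mem_sources.mp (hsrc hv)).2 u
    have horient : u ∈ I → v ∈ W → G.Adj u v → (u, v) ∈ D := fun hu hv huv =>
      (hD.orient u (hIW hu) v hv huv).mpr (hsrc_u hu)
    have harc := hD.arc_of_mem (u, v)
    simp only [mem_union, mem_filter, mem_sdiff, mem_arcsFrom]
    tauto

lemma sum_indepBlocks_filter_mul_card_acyclicOrientations_sdiff (W : Finset V)
    (Q : Finset V → Prop) [DecidablePred Q] :
    ∑ I ∈ G.indepBlocks W with Q I, -(-1 : ℤ) ^ #I * #(G.acyclicOrientations (W \ I)) =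
      ∑ D ∈ G.acyclicOrientations W,
        ∑ I ∈ (sources W D).powerset with I.Nonempty ∧ Q I, -(-1 : ℤ) ^ #I := by
  calc _ = ∑ I ∈ G.indepBlocks W with Q I, ∑ D ∈ G.acyclicOrientations W,
          if I ⊆ sources W D then -(-1 : ℤ) ^ #I else 0 := by
        refine sum_congr rfl fun I hI => ?_
        obtain ⟨hIW, -, hI⟩ := mem_indepBlocks.mp (mem_filter.mp hI).1
        rw [card_acyclicOrientations_sdiff hIW hI, card_filter, Nat.cast_sum, mul_sum]
        simp
    _ = ∑ D ∈ G.acyclicOrientations W, ∑ I ∈ G.indepBlocks W with Q I,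
          if I ⊆ sources W D then -(-1 : ℤ) ^ #I else 0 := sum_comm
    _ = _ := by
        refine sum_congr rfl fun D hD => ?_
        have hD := mem_acyclicOrientations.mp hD
        rw [← sum_filter, filter_filter]
        refine sum_congr (ext fun I => ?_) fun _ _ => rfl
        simp only [mem_filter, mem_indepBlocks, mem_powerset]
        exact ⟨fun ⟨⟨_, hne, _⟩, hQ, hsub⟩ => ⟨hsub, hne, hQ⟩, fun ⟨hsub, hne, hQ⟩ =>
          ⟨⟨hsub.trans sources_subset, hne, hD.indepSet_sources.mono hsub⟩, hQ, hsub⟩⟩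

lemma card_acyclicOrientations_eq_sum {W : Finset V} (hW : W.Nonempty) :
    (#(G.acyclicOrientations W) : ℤ) =
      ∑ I ∈ G.indepBlocks W, -(-1 : ℤ) ^ #I * #(G.acyclicOrientations (W \ I)) := by
  have h := sum_indepBlocks_filter_mul_card_acyclicOrientations_sdiff (G := G) W fun _ => True
  simp only [filter_true, and_true] at h
  rw [h, card_eq_sum_ones, Nat.cast_sum]
  exact sum_congr rfl fun D hD => by
    rw [sum_powerset_filter_nonempty_neg_one_pow
      ((mem_acyclicOrientations.mp hD).sources_nonempty hW), Nat.cast_one]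

lemma card_filter_sources_eq_singleton (W : Finset V) (v : V) :
    (#{D ∈ G.acyclicOrientations W | sources W D = {v}} : ℤ) =
      ∑ I ∈ G.indepBlocks W with v ∈ I, -(-1 : ℤ) ^ #I * #(G.acyclicOrientations (W \ I)) := by
  rw [sum_indepBlocks_filter_mul_card_acyclicOrientations_sdiff, card_filter, Nat.cast_sum]
  refine sum_congr rfl fun D _ => ?_
  rw [filter_congr fun I _ => and_iff_right_of_imp fun hv => ⟨v, hv⟩,
    sum_powerset_filter_mem_neg_one_pow]
  push_cast
  rfl

lemma card_acyclicOrientations_empty : #(G.acyclicOrientations ∅) = 1 := by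
  refine card_eq_one.mpr ⟨∅, eq_singleton_iff_unique_mem.mpr ⟨?_, fun D hD => ?_⟩⟩
  · exact mem_acyclicOrientations.mpr
      ⟨by simp, by simp, fun S hS hSne => absurd (subset_empty.mp hS) hSne.ne_empty⟩
  · exact eq_empty_of_forall_notMem fun p hp =>
      notMem_empty _ ((mem_acyclicOrientations.mp hD).arc_of_mem p hp).1

variable (G) in
/-- Terms with `k > #W` vanish, so one bound `Fintype.card V` serves every `W`. -/
noncomputable def altPartitionSum (W : Finset V) : ℤ :=
  ∑ k ∈ range (Fintype.card V + 1), (-1) ^ k * #(G.orderedPartitions W k)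

lemma sum_range_card_eq_altPartitionSum {W : Finset V} (hW : #W < Fintype.card V) :
    ∑ k ∈ range (Fintype.card V), (-1 : ℤ) ^ k * #(G.orderedPartitions W k) =
      G.altPartitionSum W := by
  rw [altPartitionSum, sum_range_succ, card_orderedPartitions_of_card_lt hW, Nat.cast_zero,
    mul_zero, add_zero]

lemma altPartitionSum_eq_neg_sum {W : Finset V} (hW : W.Nonempty) :
    G.altPartitionSum W = -∑ I ∈ G.indepBlocks W, G.altPartitionSum (W \ I) := by
  have hsucc : ∀ k, #(G.orderedPartitions W (k + 1)) =
      ∑ I ∈ G.indepBlocks W, #(G.orderedPartitions (W \ I) k) := fun k => by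
    simpa using card_orderedPartitions_succ_filter W k fun _ => True
  calc G.altPartitionSum W
      = ∑ k ∈ range (Fintype.card V), (-1 : ℤ) ^ (k + 1) * #(G.orderedPartitions W (k + 1)) := by
        rw [altPartitionSum, sum_range_succ', card_orderedPartitions_zero, if_neg hW.ne_empty,
          Nat.cast_zero, mul_zero, add_zero]
    _ = -∑ I ∈ G.indepBlocks W, ∑ k ∈ range (Fintype.card V),
          (-1 : ℤ) ^ k * #(G.orderedPartitions (W \ I) k) := by
        simp_rw [hsucc, Nat.cast_sum, mul_sum, pow_succ]
        rw [sum_comm, ← sum_neg_distrib]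
        simp
    _ = -∑ I ∈ G.indepBlocks W, G.altPartitionSum (W \ I) := by
        refine congrArg _ (sum_congr rfl fun I hI => sum_range_card_eq_altPartitionSum ?_)
        obtain ⟨hIW, hIne, -⟩ := mem_indepBlocks.mp hI
        exact (card_lt_card (sdiff_ssubset hIW hIne)).trans_le (card_le_univ W)

theorem altPartitionSum_eq_card_acyclicOrientations (W : Finset V) :
    G.altPartitionSum W = (-1) ^ #W * #(G.acyclicOrientations W) := by
  induction W using Finset.strongInduction with
  | H W ih =>
    rcases W.eq_empty_or_nonempty with rfl | hW
    · have hvanish : ∀ k, #(G.orderedPartitions (∅ : Finset V) (k + 1)) = 0 := fun k =>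
        card_orderedPartitions_of_card_lt (by simp)
      simp [altPartitionSum, sum_range_succ', hvanish, card_orderedPartitions_zero,
        card_acyclicOrientations_empty]
    · rw [altPartitionSum_eq_neg_sum hW, card_acyclicOrientations_eq_sum hW, mul_sum,
        ← sum_neg_distrib]
      refine sum_congr rfl fun I hI => ?_
      obtain ⟨hIW, hIne, -⟩ := mem_indepBlocks.mp hI
      rw [ih _ (sdiff_ssubset hIW hIne), neg_one_pow_card_sdiff hIW]
      ring

variable (G) in
noncomputable def arcsBy {α : Type*} [LT α] (f : V → α) : Finset (V × V) :=
  {p | G.Adj p.1 p.2 ∧ f p.1 < f p.2}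

lemma mem_sources_univ_arcsBy {α : Type*} [LT α] {f : V → α} {v : V} :
    v ∈ sources univ (G.arcsBy f) ↔ ∀ u, G.Adj u v → ¬ f u < f v := by
  simp [mem_sources, arcsBy]

lemma isAcyclicOrientation_arcsBy {α : Type*} [LinearOrder α] {f : V → α}
    (hf : Function.Injective f) : G.IsAcyclicOrientation univ (G.arcsBy f) where
  arc_of_mem p hp := by
    simp only [arcsBy, mem_filter] at hp
    exact ⟨mem_univ _, mem_univ _, hp.2.1⟩
  orient u _ v _ huv := by
    have hne : f u ≠ f v := hf.ne huv.ne
    simp only [arcsBy, mem_filter, mem_univ, true_and, huv, huv.symm, not_lt]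
    exact ⟨le_of_lt, fun h => lt_of_le_of_ne h hne⟩
  exists_source S _ hS := by
    obtain ⟨v, hv, hmin⟩ := exists_min_image S f hS
    refine ⟨v, hv, fun u hu hmem => ?_⟩
    simp only [arcsBy, mem_filter] at hmem
    exact (hmem.2.2.trans_le (hmin u hu)).false

lemma Connected.exists_sources_eq_singleton (hG : G.Connected) (v : V) :
    ∃ D ∈ G.acyclicOrientations univ, sources univ D = {v} := by
  -- orient each edge towards the endpoint farther from `v`, ties broken by an enumeration of `V`
  let e := Fintype.equivFin V
  let f : V → ℕ ×ₗ ℕ := fun x => toLex (G.dist x v, (e x : ℕ))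
  have hf : Function.Injective f := fun x y hxy =>
    e.injective (Fin.ext (Prod.ext_iff.mp (toLex.injective hxy)).2)
  have hdist : ∀ {x y}, G.dist x v < G.dist y v → f x < f y := fun h =>
    Prod.Lex.lt_iff.mpr (Or.inl h)
  refine ⟨G.arcsBy f, mem_acyclicOrientations.mpr (isAcyclicOrientation_arcsBy hf), ?_⟩
  ext x
  rw [mem_sources_univ_arcsBy, mem_singleton]
  constructor
  · intro hx
    by_contra hne
    obtain ⟨y, hxy, hy⟩ := (hG.preconnected x v).exists_adj_dist_lt hne
    exact hx y hxy.symm (hdist hy)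
  · rintro rfl u hu
    have : G.dist x x < G.dist u x := by
      rw [dist_self]; exact hG.pos_dist_of_ne hu.ne
    exact (hdist this).asymm

namespace IsAcyclicOrientation

variable {D : Finset (V × V)}

lemma exists_mem_sources_reachable (hD : G.IsAcyclicOrientation univ D) (w : V) :
    ∃ v ∈ sources univ D, G.Reachable w v := by
  obtain ⟨v, hv, hsrc⟩ :=
    hD.exists_source {x | G.Reachable w x} (subset_univ _) ⟨w, by simp⟩
  have hwv : G.Reachable w v := (mem_filter.mp hv).2
  refine ⟨v, mem_sources.mpr ⟨mem_univ v, fun u hu => hsrc u ?_ hu⟩, hwv⟩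
  exact mem_filter.mpr ⟨mem_univ u, hwv.trans (hD.arc_of_mem _ hu).2.2.symm.reachable⟩

lemma connected_of_sources_eq_singleton (hD : G.IsAcyclicOrientation univ D) {v : V}
    (h : sources univ D = {v}) : G.Connected := by
  have hreach : ∀ w, G.Reachable w v := fun w => by
    obtain ⟨u, hu, hwu⟩ := hD.exists_mem_sources_reachable w
    rwa [h, mem_singleton.mp hu] at *
  have : Nonempty V := ⟨v⟩
  exact ⟨fun x y => (hreach x).trans (hreach y).symm⟩

end IsAcyclicOrientation

lemma orderedPartCount_eq_card (k : ℕ) : orderedPartCount G k = #(G.orderedPartitions univ k) := by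
  rw [orderedPartCount, Nat.card_eq_fintype_card, Fintype.card_subtype, orderedPartitions]
  exact congrArg card (filter_congr fun J _ =>
    ⟨fun ⟨h1, h2, h3, h4⟩ => ⟨h1, h2, h3, fun _ => subset_univ _, fun v _ => h4 v⟩,
      fun h => ⟨h.nonempty, h.indep, h.disjoint, fun v => h.cover v (mem_univ v)⟩⟩)

lemma card_filter_sources_eq_singleton_eq_sum_orderedPartitions (v : V) :
    (#{D ∈ G.acyclicOrientations univ | sources univ D = {v}} : ℤ) =
      (-1) ^ Fintype.card V * ∑ k ∈ range (Fintype.card V),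
        (-1) ^ (k + 1) * (#{J ∈ G.orderedPartitions univ (k + 1) | v ∈ J (Fin.last k)} : ℤ) := by
  rw [card_filter_sources_eq_singleton]
  simp_rw [card_orderedPartitions_succ_filter univ _ (v ∈ ·), Nat.cast_sum, mul_sum]
  rw [sum_comm]
  refine sum_congr rfl fun I hI => ?_
  obtain ⟨-, hIne, -⟩ := mem_indepBlocks.mp (mem_filter.mp hI).1
  have hlt : #(univ \ I) < Fintype.card V :=
    (card_lt_card (sdiff_ssubset (subset_univ I) hIne)).trans_le (card_le_univ _)
  have hsq : (-1 : ℤ) ^ Fintype.card V * (-1) ^ Fintype.card V = 1 := by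
    rw [← mul_pow]; norm_num
  calc -(-1 : ℤ) ^ #I * #(G.acyclicOrientations (univ \ I))
      = (-1) ^ Fintype.card V * -((-1) ^ #(univ \ I) * #(G.acyclicOrientations (univ \ I))) := by
        rw [neg_one_pow_card_sdiff (subset_univ I), card_univ]
        linear_combination ((-1 : ℤ) ^ #I * #(G.acyclicOrientations (univ \ I))) * hsq
    _ = (-1) ^ Fintype.card V * -∑ k ∈ range (Fintype.card V),
          (-1 : ℤ) ^ k * #(G.orderedPartitions (univ \ I) k) := by
        rw [← altPartitionSum_eq_card_acyclicOrientations, sum_range_card_eq_altPartitionSum hlt]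
    _ = _ := by
        rw [← sum_neg_distrib, mul_sum]
        simp [pow_succ]

theorem cNum_eq_card_sources_eq_singleton (v : V) :
    cNum G = #{D ∈ G.acyclicOrientations univ | sources univ D = {v}} := by
  rw [← Int.cast_natCast, card_filter_sources_eq_singleton_eq_sum_orderedPartitions, cNum,
    ← Ico_add_one_right_eq_Icc, sum_Ico_eq_sum_range, Nat.add_sub_cancel]
  push_cast
  refine congrArg _ (sum_congr rfl fun k _ => ?_)
  rw [add_comm 1 k, orderedPartCount_eq_card,
    card_orderedPartitions_eq_mul (mem_univ v) (Fin.last k)]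
  push_cast
  field_simp
  ring

end SimpleGraph

theorem stmt_1 {V : Type*} [Fintype V] (G : SimpleGraph V) (hn : 1 ≤ Fintype.card V) :
    0 < cNum G ↔ G.Connected := by
  classical
  obtain ⟨v⟩ := Fintype.card_pos_iff.mp hn
  rw [G.cNum_eq_card_sources_eq_singleton v, Nat.cast_pos, card_pos]
  constructor
  · rintro ⟨D, hD⟩
    obtain ⟨hD, hsrc⟩ := mem_filter.mp hD
    exact (SimpleGraph.mem_acyclicOrientations.mp hD).connected_of_sources_eq_singleton hsrc
  · intro hG
    obtain ⟨D, hD, hsrc⟩ := hG.exists_sources_eq_singleton v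
    exact ⟨D, mem_filter.mpr ⟨hD, hsrc⟩⟩
end

section
/- Let G be a finite simple graph with at least one vertex. The coefficient of x^1 in the chromatic polynomial P(G,x) is nonzero if and only if G is connected. -/
/-!
Write `P(G/H)` for the number of proper colorings of `G` with the edges of `H` contracted.
Deletion–contraction, `P(G/H) = P((G - e)/H) - P((G - e)/(H + e))`, shows by induction on the
edges of `G` that if the contraction is loopless with `c` vertices, then `(-1)^(c+1)` times its
linear coefficient is nonnegative, and positive exactly when `G ⊔ H` is connected. The two
summands have the same sign, and connectivity survives in one of them: if `e` is not a bridge of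
`G ⊔ H` then `G - e` keeps it connected, and if it is, contracting it creates no loop.
Taking `H = ⊥` gives the theorem.
-/

/-- The number of proper colorings of `G` with a palette of `x` colors. -/
noncomputable def properColoringCount {V : Type*} [Fintype V] (G : SimpleGraph V) (x : ℕ) : ℕ :=
  Nat.card {f : V → Fin x // ∀ v w, G.Adj v w → f v ≠ f w}

namespace SimpleGraph

variable {V : Type*} {G H K : SimpleGraph V} {u v a b : V}

lemma Reachable.eq_of_forall_adj {α : Sort*} {f : V → α} (hf : ∀ v w, H.Adj v w → f v = f w)
    (h : H.Reachable a b) : f a = f b := by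
  obtain ⟨p⟩ := h
  induction p with
  | nil => rfl
  | cons hadj _ ih => exact (hf _ _ hadj).trans ih

lemma Reachable.of_forall_adj (hK : ∀ v w, H.Adj v w → K.Reachable v w) (h : H.Reachable a b) :
    K.Reachable a b :=
  ConnectedComponent.exact <| h.eq_of_forall_adj fun v w hvw ↦ ConnectedComponent.sound (hK v w hvw)

lemma card_connectedComponent_eq_one_iff : Nat.card H.ConnectedComponent = 1 ↔ H.Connected := by
  rw [Nat.card_eq_one_iff_unique, connected_iff]
  refine and_congr ⟨fun _ v w ↦ ConnectedComponent.exact (Subsingleton.elim _ _),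
    Preconnected.subsingleton_connectedComponent⟩
    ⟨fun ⟨c⟩ ↦ ?_, fun ⟨v⟩ ↦ ⟨H.connectedComponentMk v⟩⟩
  induction c using ConnectedComponent.ind with | h v => exact ⟨v⟩

lemma Reachable.of_sup_edge (h : (H ⊔ edge u v).Reachable a b) :
    H.Reachable a b ∨ (H.Reachable a u ∧ H.Reachable v b) ∨
      (H.Reachable a v ∧ H.Reachable u b) := by
  classical
  -- `f` merges the `H`-component of `v` into that of `u`, so it is constant along `H ⊔ edge u v`.
  let f : V → H.ConnectedComponent := fun x ↦
    if H.Reachable x v then H.connectedComponentMk u else H.connectedComponentMk x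
  have hf : f a = f b := h.eq_of_forall_adj fun x y hxy ↦ by
    rcases hxy with hxy | hxy
    · have : H.Reachable x v ↔ H.Reachable y v := ⟨hxy.symm.reachable.trans, hxy.reachable.trans⟩
      simp only [f, this, ConnectedComponent.connectedComponentMk_eq_of_adj hxy]
    · rw [edge_adj] at hxy
      rcases hxy with ⟨⟨rfl, rfl⟩ | ⟨rfl, rfl⟩, -⟩ <;> simp [f]
  by_cases ha : H.Reachable a v <;> by_cases hb : H.Reachable b v <;>
    simp only [f, ha, hb, if_true, if_false, ConnectedComponent.eq] at hf
  · exact .inl (ha.trans hb.symm)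
  · exact .inr (.inr ⟨ha, hf⟩)
  · exact .inr (.inl ⟨hf, hb.symm⟩)
  · exact .inl hf

lemma card_connectedComponent_sup_edge [Finite V] (h : ¬H.Reachable u v) :
    Nat.card (H ⊔ edge u v).ConnectedComponent + 1 = Nat.card H.ConnectedComponent := by
  classical
  have huv : (H ⊔ edge u v).Reachable u v :=
    Adj.reachable (.inr ((edge_adj ..).mpr ⟨.inl ⟨rfl, rfl⟩, fun e ↦ h (e ▸ .rfl)⟩))
  let φ (c : {c : H.ConnectedComponent // c ≠ H.connectedComponentMk v}) :
      (H ⊔ edge u v).ConnectedComponent := c.1.map (Hom.ofLE le_sup_left)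
  have hφ : Function.Bijective φ := by
    constructor
    · rintro ⟨c, hc⟩ ⟨d, hd⟩ hcd
      induction c using ConnectedComponent.ind with | h a =>
      induction d using ConnectedComponent.ind with | h b =>
      simp only [φ, ConnectedComponent.map_mk, Hom.coe_ofLE, id, ne_eq, ConnectedComponent.eq]
        at hc hd hcd
      rcases hcd.of_sup_edge with hab | ⟨-, hvb⟩ | ⟨hav, -⟩
      · exact Subtype.ext (ConnectedComponent.sound hab)
      · exact absurd hvb.symm hd
      · exact absurd hav hc
    · intro c
      induction c using ConnectedComponent.ind with | h x =>
      by_cases hx : H.Reachable x v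
      · refine ⟨⟨H.connectedComponentMk u, by simpa using h⟩, ?_⟩
        simpa [φ] using huv.trans (hx.mono le_sup_left).symm
      · exact ⟨⟨H.connectedComponentMk x, by simpa using hx⟩, rfl⟩
  rw [← Nat.card_congr (Equiv.ofBijective φ hφ), ← Finite.card_option,
    Nat.card_congr (Equiv.optionSubtypeNe _)]

lemma Connected.of_sup_edge (h : (K ⊔ edge u v).Connected) (huv : K.Reachable u v) :
    K.Connected := by
  have := h.nonempty
  refine ⟨fun a b ↦ (h.preconnected a b).of_forall_adj fun x y hxy ↦ ?_⟩
  rcases hxy with hxy | hxy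
  · exact hxy.reachable
  · rcases (edge_adj ..).mp hxy with ⟨⟨rfl, rfl⟩ | ⟨rfl, rfl⟩, -⟩
    exacts [huv, huv.symm]

/-- The multigraph obtained from `G` by contracting every edge of `H` has no loops. -/
def LooplessContraction (G H : SimpleGraph V) : Prop :=
  ∀ v w, G.Adj v w → ¬H.Reachable v w

lemma connected_and_looplessContraction_iff (hG : G.Adj u v) (hH : ¬H.Reachable u v) :
    ((G \ edge u v ⊔ H).Connected ∧ LooplessContraction (G \ edge u v) H) ∨
      ((G \ edge u v ⊔ (H ⊔ edge u v)).Connected ∧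
        LooplessContraction (G \ edge u v) (H ⊔ edge u v)) ↔
      (G ⊔ H).Connected ∧ LooplessContraction G H := by
  have hsup : G \ edge u v ⊔ (H ⊔ edge u v) = G ⊔ H := by
    rw [sup_comm H, ← sup_assoc, sdiff_sup_cancel ((edge_le_iff G).mpr (.inr hG))]
  have hloop : LooplessContraction (G \ edge u v) H ↔ LooplessContraction G H := by
    refine ⟨fun h a b hab ↦ ?_, fun h a b hab ↦ h a b hab.1⟩
    by_cases he : (edge u v).Adj a b
    · rcases (edge_adj ..).mp he with ⟨⟨rfl, rfl⟩ | ⟨rfl, rfl⟩, -⟩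
      exacts [hH, fun h' ↦ hH h'.symm]
    · exact h a b ⟨hab, he⟩
  rw [hsup, hloop]
  constructor
  · rintro (⟨hc, hl⟩ | ⟨hc, hl⟩)
    · exact ⟨hc.mono (sup_le_sup_right sdiff_le _), hl⟩
    · exact ⟨hc, hloop.mp fun a b hab hr ↦ hl a b hab (hr.mono le_sup_left)⟩
  · rintro ⟨hc, hl⟩
    by_cases hl' : LooplessContraction (G \ edge u v) (H ⊔ edge u v)
    · exact .inr ⟨hsup ▸ hc, hl'⟩
    refine .inl ⟨Connected.of_sup_edge (by rwa [sup_assoc, hsup]) ?_, hl⟩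
    unfold LooplessContraction at hl'
    push Not at hl'
    obtain ⟨a, b, hab, hr⟩ := hl'
    have hab' : (G \ edge u v ⊔ H).Reachable a b := Adj.reachable (Or.inl hab)
    rcases hr.of_sup_edge with hr | ⟨hau, hvb⟩ | ⟨hav, hub⟩
    · exact absurd hr (hl a b hab.1)
    · exact (hau.mono le_sup_right).symm.trans (hab'.trans (hvb.mono le_sup_right).symm)
    · exact (hub.mono le_sup_right).trans (hab'.symm.trans (hav.mono le_sup_right))

/-- The number of proper colorings of the graph obtained from `G` by contracting every edge
of `H`. -/
noncomputable def contractedColoringCount (G H : SimpleGraph V) (x : ℕ) : ℕ :=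
  Nat.card {f : V → Fin x // (∀ v w, G.Adj v w → f v ≠ f w) ∧ ∀ v w, H.Adj v w → f v = f w}

lemma contractedColoringCount_bot_right [Fintype V] (G : SimpleGraph V) (x : ℕ) :
    contractedColoringCount G ⊥ x = properColoringCount G x :=
  Nat.card_congr <| Equiv.subtypeEquivRight fun f ↦ by simp

lemma contractedColoringCount_bot_left [Finite V] (H : SimpleGraph V) (x : ℕ) :
    contractedColoringCount ⊥ H x = x ^ Nat.card H.ConnectedComponent := by
  let e : {f : V → Fin x // (∀ v w, (⊥ : SimpleGraph V).Adj v w → f v ≠ f w) ∧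
      ∀ v w, H.Adj v w → f v = f w} ≃ (H.ConnectedComponent → Fin x) :=
    { toFun f := ConnectedComponent.lift f.1 fun _ _ p _ ↦ p.reachable.eq_of_forall_adj f.2.2
      invFun g := ⟨g ∘ H.connectedComponentMk, by simp,
        fun _ _ h ↦ congrArg g (ConnectedComponent.connectedComponentMk_eq_of_adj h)⟩
      left_inv _ := rfl
      right_inv g := by ext c; induction c using ConnectedComponent.ind; rfl }
  rw [contractedColoringCount, Nat.card_congr e, Nat.card_fun, Nat.card_fin]

lemma contractedColoringCount_eq_zero (hG : G.Adj u v) (hH : H.Reachable u v) (x : ℕ) :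
    contractedColoringCount G H x = 0 :=
  Nat.card_eq_zero.mpr <| .inl ⟨fun f ↦ f.2.1 u v hG (hH.eq_of_forall_adj f.2.2)⟩

lemma forall_adj_ne_iff_sdiff_edge {α : Type*} {f : V → α} (hG : G.Adj u v) :
    (∀ a b, G.Adj a b → f a ≠ f b) ↔ (∀ a b, (G \ edge u v).Adj a b → f a ≠ f b) ∧ f u ≠ f v := by
  refine ⟨fun h ↦ ⟨fun a b hab ↦ h a b hab.1, h u v hG⟩, fun ⟨h, huv⟩ a b hab ↦ ?_⟩
  by_cases he : (edge u v).Adj a b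
  · rcases (edge_adj ..).mp he with ⟨⟨rfl, rfl⟩ | ⟨rfl, rfl⟩, -⟩
    exacts [huv, huv.symm]
  · exact h a b ⟨hab, he⟩

lemma forall_adj_eq_iff_sup_edge {α : Type*} {f : V → α} (huv : u ≠ v) :
    (∀ a b, (H ⊔ edge u v).Adj a b → f a = f b) ↔ (∀ a b, H.Adj a b → f a = f b) ∧ f u = f v := by
  refine ⟨fun h ↦ ⟨fun a b hab ↦ h a b (.inl hab),
    h u v (.inr ((edge_adj ..).mpr ⟨.inl ⟨rfl, rfl⟩, huv⟩))⟩, fun ⟨h, huv⟩ a b hab ↦ ?_⟩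
  rcases hab with hab | hab
  · exact h a b hab
  · rcases (edge_adj ..).mp hab with ⟨⟨rfl, rfl⟩ | ⟨rfl, rfl⟩, -⟩
    exacts [huv, huv.symm]

lemma contractedColoringCount_sdiff_edge [Finite V] (hG : G.Adj u v) (x : ℕ) :
    contractedColoringCount (G \ edge u v) H x =
      contractedColoringCount G H x + contractedColoringCount (G \ edge u v) (H ⊔ edge u v) x := by
  classical
  let p (f : V → Fin x) : Prop :=
    (∀ a b, (G \ edge u v).Adj a b → f a ≠ f b) ∧ ∀ a b, H.Adj a b → f a = f b
  have hsplit := Nat.card_congr (Equiv.sumCompl fun f : Subtype p ↦ f.1 u ≠ f.1 v).symm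
  rw [Nat.card_sum] at hsplit
  unfold contractedColoringCount
  rw [show Nat.card {f // p f} = _ from hsplit]
  congr 1
  · refine Nat.card_congr <| (Equiv.subtypeSubtypeEquivSubtypeInter p fun f ↦ f u ≠ f v).trans <|
      Equiv.subtypeEquivRight fun f ↦ ?_
    rw [forall_adj_ne_iff_sdiff_edge hG]; simp only [p]; tauto
  · refine Nat.card_congr <| (Equiv.subtypeSubtypeEquivSubtypeInter p fun f ↦ ¬f u ≠ f v).trans <|
      Equiv.subtypeEquivRight fun f ↦ ?_
    rw [forall_adj_eq_iff_sup_edge hG.ne]; simp only [p, not_not]; tauto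

open Polynomial in
theorem exists_poly_contractedColoringCount [Finite V] (G H : SimpleGraph V) :
    ∃ Q : ℚ[X], (∀ x : ℕ, Q.eval (x : ℚ) = contractedColoringCount G H x) ∧
      0 ≤ (-1) ^ (Nat.card H.ConnectedComponent + 1) * Q.coeff 1 ∧
      (Q.coeff 1 ≠ 0 ↔ (G ⊔ H).Connected ∧ LooplessContraction G H) := by
  obtain ⟨n, hn⟩ : ∃ n, G.edgeSet.ncard = n := ⟨_, rfl⟩
  induction n using Nat.strong_induction_on generalizing G H with | _ n ih =>
  by_cases hG : ∃ u v, G.Adj u v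
  swap
  · obtain rfl : G = ⊥ := by ext a b; simpa using not_exists.mp (not_exists.mp hG a) b
    refine ⟨X ^ Nat.card H.ConnectedComponent,
      fun x ↦ by simp [contractedColoringCount_bot_left], ?_, ?_⟩
    · rw [coeff_X_pow]
      split_ifs with h
      · simp [← h]
      · simp
    · simp [coeff_X_pow, LooplessContraction, ← card_connectedComponent_eq_one_iff,
        eq_comm (a := 1)]
  obtain ⟨u, v, huv⟩ := hG
  by_cases hH : H.Reachable u v
  · refine ⟨0, fun x ↦ by simp [contractedColoringCount_eq_zero huv hH], by simp, ?_⟩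
    simpa using fun _ hl ↦ hl u v huv hH
  have hlt : (G \ edge u v).edgeSet.ncard < n := by
    rw [← hn, edgeSet_sdiff, edgeSet_edge_of_ne huv.ne]
    exact Set.ncard_sdiff_singleton_lt_of_mem huv (Set.toFinite _)
  obtain ⟨Q₁, hQ₁, hs₁, hc₁⟩ := ih _ hlt (G \ edge u v) H rfl
  obtain ⟨Q₂, hQ₂, hs₂, hc₂⟩ := ih _ hlt (G \ edge u v) (H ⊔ edge u v) rfl
  have hsign : (-1) ^ (Nat.card H.ConnectedComponent + 1) * (Q₁ - Q₂).coeff 1 =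
      (-1) ^ (Nat.card H.ConnectedComponent + 1) * Q₁.coeff 1 +
        (-1) ^ (Nat.card (H ⊔ edge u v).ConnectedComponent + 1) * Q₂.coeff 1 := by
    rw [← card_connectedComponent_sup_edge hH, coeff_sub]
    ring
  have hne (k : ℕ) (a : ℚ) : (-1) ^ k * a ≠ 0 ↔ a ≠ 0 := by simp
  refine ⟨Q₁ - Q₂, fun x ↦ ?_, hsign ▸ add_nonneg hs₁ hs₂, ?_⟩
  · rw [eval_sub, hQ₁, hQ₂, contractedColoringCount_sdiff_edge huv]
    push_cast
    ring
  · rw [← connected_and_looplessContraction_iff huv hH, ← hc₁, ← hc₂,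
      ← hne (Nat.card H.ConnectedComponent + 1), hsign, ← hne _ (Q₁.coeff 1),
      ← hne (Nat.card (H ⊔ edge u v).ConnectedComponent + 1) (Q₂.coeff 1), Ne,
      add_eq_zero_iff_of_nonneg hs₁ hs₂, not_and_or]

end SimpleGraph

theorem stmt_5_general {V : Type*} [Fintype V] (G : SimpleGraph V)
    (P : Polynomial ℚ) (hP : ∀ x : ℕ, P.eval (x : ℚ) = (properColoringCount G x : ℚ)) :
    P.coeff 1 ≠ 0 ↔ G.Connected := by
  obtain ⟨Q, hQ, -, hcoeff⟩ := SimpleGraph.exists_poly_contractedColoringCount G ⊥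
  have hPQ : P = Q := Polynomial.eq_of_infinite_eval_eq P Q <|
    Set.infinite_of_injective_forall_mem Nat.cast_injective fun x : ℕ ↦ by
      simp [hP, hQ, SimpleGraph.contractedColoringCount_bot_right]
  rw [hPQ, hcoeff, sup_bot_eq]
  exact and_iff_left fun v w h ↦ SimpleGraph.reachable_bot.not.mpr (G.ne_of_adj h)

theorem stmt_5 {V : Type*} [Fintype V] (G : SimpleGraph V) (hn : 1 ≤ Fintype.card V)
    (P : Polynomial ℚ) (hP : ∀ x : ℕ, P.eval (x : ℚ) = (properColoringCount G x : ℚ)) :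
    P.coeff 1 ≠ 0 ↔ G.Connected :=
  stmt_5_general G P hP
end

section
/- For the path graph P_n on n ≥ 1 vertices, c(P_n) = 1, where c(G) := (-1)^n · Σ_{k=1}^{n} (-1)^k c_k(G)/k and c_k(G) is the number of ordered partitions of the vertex set into k nonempty independent subsets. -/
open Finset

/-! An ordered `k`-partition into independent sets is the same thing as a surjective proper
colouring with colours `Fin k`. Write `N(n, k)` for the number of these colourings of `P_n`.
After removing the first vertex, either the rest of the path still uses every colour (and the
first vertex avoids the colour of its neighbour), or the first vertex is alone in its colour
class; hence `N(n+1, k+1) = k N(n, k+1) + (k+1) N(n, k)`. Substituted into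
`T(n) = ∑ₖ (-1)^k N(n, k) / k`, the part of the recurrence without the factor `1/k` telescopes
away, leaving `T(n+1) = -T(n)`; with `T(1) = -1` this gives `c(P_n) = (-1)^n T(n) = 1`. -/

open Function SimpleGraph

section Coloring

variable {V α β : Type*}

theorem card_subtype_prod_ne_eq [Fintype α] [Fintype β] (q : β → Prop) (φ : β → α) :
    Nat.card {p : α × β // q p.2 ∧ p.1 ≠ φ p.2} =
      (Fintype.card α - 1) * Nat.card {b // q b} := by
  classical
  let e : {p : α × β // q p.2 ∧ p.1 ≠ φ p.2} ≃ Σ b : {b // q b}, {a // a ≠ φ b} :=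
    { toFun p := ⟨⟨p.1.2, p.2.1⟩, ⟨p.1.1, p.2.2⟩⟩
      invFun x := ⟨(x.2.1, x.1.1), x.1.2, x.2.2⟩
      left_inv _ := rfl
      right_inv _ := rfl }
  rw [Nat.card_congr e, Nat.card_sigma]
  simp [Nat.card_eq_fintype_card, mul_comm]

def IsProperColoring (G : SimpleGraph V) (f : V → α) : Prop :=
  ∀ ⦃v w⦄, G.Adj v w → f v ≠ f w

theorem isProperColoring_comp_iff {G : SimpleGraph V} {f : V → α} {e : α → β}
    (he : Injective e) : IsProperColoring G (e ∘ f) ↔ IsProperColoring G f :=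
  forall₂_congr fun _ _ => imp_congr_right fun _ => not_congr he.eq_iff

noncomputable def surjColoringCount (G : SimpleGraph V) (α : Type*) : ℕ :=
  Nat.card {f : V → α // IsProperColoring G f ∧ Surjective f}

theorem surjColoringCount_congr (G : SimpleGraph V) (e : α ≃ β) :
    surjColoringCount G α = surjColoringCount G β :=
  Nat.card_congr <| Equiv.subtypeEquiv (Equiv.arrowCongr (Equiv.refl V) e) fun f =>
    and_congr (isProperColoring_comp_iff e.injective).symm
      (e.comp_surjective f).symm

theorem surjColoringCount_eq_zero_of_card_lt [Fintype V] [Fintype α] (G : SimpleGraph V)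
    (h : Fintype.card V < Fintype.card α) : surjColoringCount G α = 0 :=
  Nat.card_eq_zero.2 <| .inl ⟨fun f => h.not_ge (Fintype.card_le_of_surjective _ f.2.2)⟩

theorem surjColoringCount_of_isEmpty [Nonempty V] [IsEmpty α] (G : SimpleGraph V) :
    surjColoringCount G α = 0 :=
  Nat.card_eq_zero.2 <| .inl ⟨fun f => isEmptyElim (f.1 (Classical.arbitrary V))⟩

theorem surjColoringCount_of_unique [Unique V] [Unique α] (G : SimpleGraph V) :
    surjColoringCount G α = 1 := by
  have : Unique {f : V → α // IsProperColoring G f ∧ Surjective f} :=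
    { default := ⟨default, fun v w h => (G.ne_of_adj h (Subsingleton.elim v w)).elim,
        fun a => ⟨default, Subsingleton.elim _ _⟩⟩
      uniq := fun _ => Subsingleton.elim _ _ }
  exact Nat.card_unique

theorem orderedPartCount_eq_surjColoringCount [Fintype V] (G : SimpleGraph V) (k : ℕ) :
    orderedPartCount G k = surjColoringCount G (Fin k) := by
  classical
  let classes (f : V → Fin k) (i : Fin k) : Finset V := univ.filter (f · = i)
  have mem_classes {f v i} : v ∈ classes f i ↔ f v = i := by simp [classes]
  have classes_spec (f : {f : V → Fin k // IsProperColoring G f ∧ Surjective f}) :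
      (∀ i, (classes f.1 i).Nonempty) ∧ (∀ i, IndepSet G (classes f.1 i)) ∧
      (∀ i j, i ≠ j → Disjoint (classes f.1 i) (classes f.1 j)) ∧
      (∀ v, ∃ i, v ∈ classes f.1 i) := by
    refine ⟨fun i => ?_, fun i v hv w hw hvw => ?_, fun i j hij => ?_,
      fun v => ⟨f.1 v, mem_classes.2 rfl⟩⟩
    · obtain ⟨v, hv⟩ := f.2.2 i
      exact ⟨v, mem_classes.2 hv⟩
    · exact f.2.1 hvw ((mem_classes.1 hv).trans (mem_classes.1 hw).symm)
    · exact disjoint_left.2 fun v hi hj => hij ((mem_classes.1 hi).symm.trans (mem_classes.1 hj))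
  refine (Nat.card_eq_of_bijective (fun f => ⟨classes f.1, classes_spec f⟩) ⟨?_, ?_⟩).symm
  · intro f g hfg
    have hfg : classes f.1 = classes g.1 := congrArg Subtype.val hfg
    ext v : 2
    exact (mem_classes.1 (hfg ▸ mem_classes.2 rfl : v ∈ classes g.1 (f.1 v))).symm
  · rintro ⟨J, hne, hind, hdisj, hcover⟩
    choose f hf using id hcover
    have class_eq {v i} (hv : v ∈ J i) : f v = i :=
      by_contra fun h => disjoint_left.1 (hdisj _ _ h) (hf v) hv
    have hproper : IsProperColoring G f := fun v w hvw hfvw =>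
      hind (f v) v (hf v) w (hfvw ▸ hf w) hvw
    refine ⟨⟨f, hproper, fun i => ?_⟩, ?_⟩
    · obtain ⟨v, hv⟩ := hne i
      exact ⟨v, class_eq hv⟩
    · ext i v : 3
      exact ⟨fun h => mem_classes.1 h ▸ hf v, fun h => mem_classes.2 (class_eq h)⟩

theorem card_isProperColoring_range_eq (G : SimpleGraph V) (s : Set α) :
    Nat.card {g : V → α // IsProperColoring G g ∧ Set.range g = s} = surjColoringCount G s :=
  Nat.card_congr
    { toFun g := ⟨fun v => ⟨g.1 v, g.2.2.subset (Set.mem_range_self v)⟩,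
        (isProperColoring_comp_iff Subtype.val_injective).1 g.2.1, fun x => by
          obtain ⟨v, hv⟩ : x.1 ∈ Set.range g.1 := g.2.2.symm.subset x.2
          exact ⟨v, Subtype.ext hv⟩⟩
      invFun h := ⟨Subtype.val ∘ h.1,
        (isProperColoring_comp_iff Subtype.val_injective).2 h.2.1, by
          rw [Set.range_comp, h.2.2.range_eq, Set.image_univ, Subtype.range_coe]⟩
      left_inv _ := rfl
      right_inv _ := rfl }

end Coloring

section Path

variable {α : Type*} {n : ℕ}

theorem isProperColoring_pathGraph_cons (hn : 0 < n) (c : α) (g : Fin n → α) :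
    IsProperColoring (pathGraph (n + 1)) (Fin.cons c g : Fin (n + 1) → α) ↔
      IsProperColoring (pathGraph n) g ∧ c ≠ g ⟨0, hn⟩ := by
  constructor
  · intro h
    refine ⟨fun v w hvw => ?_, h (v := 0) (w := Fin.succ ⟨0, hn⟩) (by simp [pathGraph_adj])⟩
    simpa using h (v := v.succ) (w := w.succ) (by simpa [pathGraph_adj] using hvw)
  · rintro ⟨hg, hc⟩ v w hvw
    rcases Fin.eq_zero_or_eq_succ v with rfl | ⟨v, rfl⟩ <;>
      rcases Fin.eq_zero_or_eq_succ w with rfl | ⟨w, rfl⟩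
    · exact absurd hvw (pathGraph _).irrefl
    · obtain rfl : w = ⟨0, hn⟩ := Fin.ext (by simpa [pathGraph_adj] using hvw)
      rwa [Fin.cons_zero, Fin.cons_succ]
    · obtain rfl : v = ⟨0, hn⟩ := Fin.ext (by simpa [pathGraph_adj] using hvw)
      rwa [Fin.cons_zero, Fin.cons_succ, ne_comm]
    · simpa using hg (by simpa [pathGraph_adj] using hvw)

theorem surjective_cons_and_ne_iff (hn : 0 < n) {c : α} {g : Fin n → α} :
    Surjective (Fin.cons c g : Fin (n + 1) → α) ∧ c ≠ g ⟨0, hn⟩ ↔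
      Surjective g ∧ c ≠ g ⟨0, hn⟩ ∨ Set.range g = {c}ᶜ := by
  have hmem := Set.mem_range_self (f := g) ⟨0, hn⟩
  rw [← Set.range_eq_univ, ← Set.range_eq_univ, Fin.range_cons]
  simp only [Set.ext_iff, Set.mem_insert_iff, Set.mem_compl_iff, Set.mem_singleton_iff,
    Set.mem_univ] at *
  grind

theorem surjColoringCount_pathGraph_succ [Fintype α] (hn : 0 < n) {k : ℕ}
    (hα : Fintype.card α = k + 1) :
    surjColoringCount (pathGraph (n + 1)) α =
      k * surjColoringCount (pathGraph n) α +
        (k + 1) * surjColoringCount (pathGraph n) (Fin k) := by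
  classical
  let P := IsProperColoring (pathGraph n) (α := α)
  have decompose : surjColoringCount (pathGraph (n + 1)) α =
      Nat.card {p : α × (Fin n → α) //
        (P p.2 ∧ Surjective p.2) ∧ p.1 ≠ p.2 ⟨0, hn⟩ ∨
          P p.2 ∧ Set.range p.2 = {p.1}ᶜ} := by
    refine Nat.card_congr (Equiv.subtypeEquiv (Fin.consEquiv fun _ => α) fun p => ?_).symm
    change _ ↔ IsProperColoring _ (Fin.cons p.1 p.2) ∧ Surjective (Fin.cons p.1 p.2)
    rw [isProperColoring_pathGraph_cons hn, and_assoc, and_assoc, ← and_or_left,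
      ← surjective_cons_and_ne_iff hn]
    tauto
  have disjoint : Disjoint
      (fun p : α × (Fin n → α) => (P p.2 ∧ Surjective p.2) ∧ p.1 ≠ p.2 ⟨0, hn⟩)
      (fun p => P p.2 ∧ Set.range p.2 = {p.1}ᶜ) := by
    intro r hr₁ hr₂ p hp
    have hrange := (hr₂ p hp).2
    rw [(hr₁ p hp).1.2.range_eq] at hrange
    exact (hrange ▸ Set.mem_univ p.1 : p.1 ∈ ({p.1}ᶜ : Set α)) rfl
  have tail_surjective :
      Nat.card {p : α × (Fin n → α) //
          (P p.2 ∧ Surjective p.2) ∧ p.1 ≠ p.2 ⟨0, hn⟩} =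
        k * surjColoringCount (pathGraph n) α := by
    rw [card_subtype_prod_ne_eq (fun g => P g ∧ Surjective g) (fun g => g ⟨0, hn⟩), hα,
      Nat.add_sub_cancel]
    rfl
  have head_alone :
      Nat.card {p : α × (Fin n → α) // P p.2 ∧ Set.range p.2 = {p.1}ᶜ} =
        (k + 1) * surjColoringCount (pathGraph n) (Fin k) := by
    have fiber (c : α) : Nat.card {g // P g ∧ Set.range g = {c}ᶜ} =
        surjColoringCount (pathGraph n) (Fin k) := by
      rw [card_isProperColoring_range_eq]
      refine surjColoringCount_congr _ (Fintype.equivFinOfCardEq ?_)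
      rw [Fintype.card_compl_set, Set.card_singleton, hα, Nat.add_sub_cancel]
    rw [Nat.card_congr (Equiv.subtypeProdEquivSigmaSubtype fun c g => P g ∧ Set.range g = {c}ᶜ),
      Nat.card_sigma]
    simp only [fiber, sum_const, card_univ, hα, smul_eq_mul]
  rw [decompose, Nat.card_eq_fintype_card, Fintype.card_subtype_or_disjoint _ _ disjoint,
    ← Nat.card_eq_fintype_card, ← Nat.card_eq_fintype_card, tail_surjective, head_alone]

theorem alternating_sum_surjColoringCount_pathGraph (hn : 0 < n) :
    ∑ k ∈ range n,
        (-1 : ℚ) ^ (k + 1) * surjColoringCount (pathGraph n) (Fin (k + 1)) / (k + 1) =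
      (-1) ^ n := by
  induction n, hn using Nat.le_induction with
  | base => simp [surjColoringCount_of_unique]
  | succ n hn ih =>
    set a : ℕ → ℚ := fun k => (-1) ^ k * surjColoringCount (pathGraph n) (Fin k)
    have recurrence (k : ℕ) :
        (-1 : ℚ) ^ (k + 1) * surjColoringCount (pathGraph (n + 1)) (Fin (k + 1)) / (k + 1) =
          (a (k + 1) - a k) - a (k + 1) / (k + 1) := by
      rw [surjColoringCount_pathGraph_succ hn (Fintype.card_fin _)]
      push_cast
      field_simp
      ring
    have top : a (n + 1) = 0 := by
      simp [a, surjColoringCount_eq_zero_of_card_lt]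
    have bottom : a 0 = 0 := by
      have : Nonempty (Fin n) := ⟨⟨0, hn⟩⟩
      simp [a, surjColoringCount_of_isEmpty]
    rw [sum_congr rfl fun k _ => recurrence k, sum_sub_distrib, sum_range_sub, sum_range_succ,
      top, bottom]
    simp only [a]
    rw [ih]
    ring

end Path

theorem stmt_7 (n : ℕ) (hn : 1 ≤ n) :
    cNum (SimpleGraph.pathGraph n) = 1 := by
  have shift (f : ℕ → ℚ) : ∑ k ∈ Icc 1 n, f k = ∑ k ∈ range n, f (k + 1) := by
    rw [range_eq_Ico, sum_Ico_add', zero_add, Ico_add_one_right_eq_Icc]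
  rw [cNum, Fintype.card_fin, shift]
  simp only [orderedPartCount_eq_surjColoringCount, Nat.cast_add_one]
  rw [alternating_sum_surjColoringCount_pathGraph hn, ← mul_pow, neg_mul_neg, one_mul, one_pow]
end

section
/- Let r, s be positive integers and let a_1, ..., a_r and b_1, ..., b_s be positive integers such that ∏_{i=1}^{r} (x^{a_i} - 1) = ∏_{j=1}^{s} (x^{b_j} - 1) as polynomials in ℤ[x]. Then r = s and the multiset {a_1, ..., a_r} equals the multiset {b_1, ..., b_s}. -/
/-!
A primitive `N`-th root of unity is a root of `∏_{n ∈ B} (X ^ n - 1)` exactly when `N` divides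
some `n ∈ B`. Applied to the largest element `N` of `A` this gives `max A ≤ max B`, so by symmetry
the largest elements agree; cancelling the common factor `X ^ N - 1` and inducting gives `A = B`.
-/

open Polynomial

theorem Multiset.sup_mem_of_ne_zero {α : Type*} [LinearOrder α] [OrderBot α] {s : Multiset α}
    (hs : s ≠ 0) : s.sup ∈ s := by
  induction s using Multiset.induction_on with
  | empty => contradiction
  | cons a s ih =>
    rw [Multiset.sup_cons]
    rcases eq_or_ne s 0 with rfl | hs'
    · simp
    rcases le_total a s.sup with h | h
    · rw [sup_eq_right.2 h]
      exact Multiset.mem_cons_of_mem (ih hs')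
    · rw [sup_eq_left.2 h]
      exact Multiset.mem_cons_self a s

noncomputable def prodXPowSubOne (A : Multiset ℕ) : ℤ[X] :=
  (A.map fun n => X ^ n - 1).prod

@[simp]
theorem prodXPowSubOne_cons (n : ℕ) (A : Multiset ℕ) :
    prodXPowSubOne (n ::ₘ A) = (X ^ n - 1) * prodXPowSubOne A := by
  simp [prodXPowSubOne]

theorem aeval_prodXPowSubOne_eq_zero_iff {R : Type*} [CommRing R] [IsDomain R] {ζ : R} {N : ℕ}
    (hζ : IsPrimitiveRoot ζ N) (A : Multiset ℕ) :
    aeval ζ (prodXPowSubOne A) = 0 ↔ ∃ n ∈ A, N ∣ n := by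
  simp [prodXPowSubOne, map_multiset_prod, Multiset.prod_eq_zero_iff, sub_eq_zero,
    hζ.pow_eq_one_iff_dvd]

theorem exists_dvd_of_prodXPowSubOne_eq {A B : Multiset ℕ}
    (h : prodXPowSubOne A = prodXPowSubOne B) {N : ℕ} (hN : N ∈ A) (hN₀ : 0 < N) :
    ∃ m ∈ B, N ∣ m := by
  have hζ := Complex.isPrimitiveRoot_exp N hN₀.ne'
  rw [← aeval_prodXPowSubOne_eq_zero_iff hζ, ← h, aeval_prodXPowSubOne_eq_zero_iff hζ]
  exact ⟨N, hN, dvd_rfl⟩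

theorem sup_le_sup_of_prodXPowSubOne_eq {A B : Multiset ℕ} (hB : ∀ n ∈ B, 0 < n)
    (h : prodXPowSubOne A = prodXPowSubOne B) : A.sup ≤ B.sup := by
  refine Multiset.sup_le.2 fun N hN => ?_
  rcases N.eq_zero_or_pos with rfl | hN₀
  · exact Nat.zero_le _
  obtain ⟨m, hm, hNm⟩ := exists_dvd_of_prodXPowSubOne_eq h hN hN₀
  exact (Nat.le_of_dvd (hB m hm) hNm).trans (Multiset.le_sup hm)

theorem eq_of_prodXPowSubOne_eq {A B : Multiset ℕ} (hA : ∀ n ∈ A, 0 < n) (hB : ∀ n ∈ B, 0 < n)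
    (h : prodXPowSubOne A = prodXPowSubOne B) : A = B := by
  induction A using Multiset.strongInductionOn generalizing B with
  | ih A IH =>
  have hsup : A.sup = B.sup :=
    (sup_le_sup_of_prodXPowSubOne_eq hB h).antisymm (sup_le_sup_of_prodXPowSubOne_eq hA h.symm)
  have sup_pos {C : Multiset ℕ} (hC : ∀ n ∈ C, 0 < n) (hC₀ : C ≠ 0) : 0 < C.sup :=
    hC _ (Multiset.sup_mem_of_ne_zero hC₀)
  rcases eq_or_ne A 0 with rfl | hA₀
  · by_contra hB₀
    exact (sup_pos hB (Ne.symm hB₀)).ne' (hsup ▸ Multiset.sup_zero)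
  have hB₀ : B ≠ 0 := by
    rintro rfl
    exact (sup_pos hA hA₀).ne' hsup
  set N := A.sup
  have hNA : N ∈ A := Multiset.sup_mem_of_ne_zero hA₀
  have hNB : N ∈ B := hsup ▸ Multiset.sup_mem_of_ne_zero hB₀
  rw [← Multiset.cons_erase hNA, ← Multiset.cons_erase hNB, prodXPowSubOne_cons,
    prodXPowSubOne_cons] at h
  have hX : (X ^ N - 1 : ℤ[X]) ≠ 0 := X_pow_sub_C_ne_zero (hA N hNA) 1
  rw [← Multiset.cons_erase hNA, ← Multiset.cons_erase hNB,
    IH _ (Multiset.erase_lt.2 hNA) (fun n hn => hA n (Multiset.mem_of_mem_erase hn))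
      (fun n hn => hB n (Multiset.mem_of_mem_erase hn)) (mul_left_cancel₀ hX h)]

theorem stmt_16_general (r s : ℕ) (a : Fin r → ℕ) (b : Fin s → ℕ)
    (ha : ∀ i, 0 < a i) (hb : ∀ j, 0 < b j)
    (h : (∏ i : Fin r, ((Polynomial.X : Polynomial ℤ) ^ (a i) - 1))
        = ∏ j : Fin s, ((Polynomial.X : Polynomial ℤ) ^ (b j) - 1)) :
    r = s ∧ Multiset.map a Finset.univ.val = Multiset.map b Finset.univ.val := by
  have heq : Multiset.map a Finset.univ.val = Multiset.map b Finset.univ.val := by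
    refine eq_of_prodXPowSubOne_eq (by simpa using ha) (by simpa using hb) ?_
    simp only [prodXPowSubOne, Multiset.map_map]
    exact h
  refine ⟨?_, heq⟩
  simpa using congrArg Multiset.card heq

theorem stmt_16 (r s : ℕ) (hr : 1 ≤ r) (hs : 1 ≤ s) (a : Fin r → ℕ) (b : Fin s → ℕ)
    (ha : ∀ i, 0 < a i) (hb : ∀ j, 0 < b j)
    (h : (∏ i : Fin r, ((Polynomial.X : Polynomial ℤ) ^ (a i) - 1))
        = ∏ j : Fin s, ((Polynomial.X : Polynomial ℤ) ^ (b j) - 1)) :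
    r = s ∧ Multiset.map a Finset.univ.val = Multiset.map b Finset.univ.val :=
  stmt_16_general r s a b ha hb h
end
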